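/- arXiv:2005.11911 — 2 statements merged into one kernel-verified Lean document; each statement's English description precedes it below -/
import Mathlib

section
/- The discriminability estimators satisfy 0 ≤ D̃ - D̂ ≤ (s-2)/(2(n-1)s), where D̂ is the sample discriminability and D̃ = (n²s²(s-1) - Σ_{t}Σ_{t'≠t}Σ_i r_{ii}^{tt'})/(ns(s-1)(n-1)s) is the rank-form estimator, with equality D̃ - D̂ = (s-2)/(2(n-1)s) when no ties exist among the within-subject distances δ_{i,i}^{t,t'} for each fixed i, t. -/
open Finset

/-!
For a fixed row `(i, t)` and a within-subject column `(i, t')`, the max-rank counts the entries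
`≤ δ_{i,i}^{t,t'}`, so `ns - r_{ii}^{tt'}` counts the entries strictly above it. Those split into
the between-subject ones, which are exactly the comparisons summed in `D̂`, and the within-subject
ones, among which the diagonal entry `δ_{i,i}^{t,t} = 0` never occurs. Hence the numerator of
`D̃ - D̂` is `Σ_{i,t}` of the number of ordered pairs `(t', t'')` of indices different from `t`
with `δ_{i,i}^{t,t'} < δ_{i,i}^{t,t''}`. A pair and its swap cannot both be increasing, so this
number is at most `(s-1)(s-2)/2`, with equality when there are no ties.
-/

section IncreasingPairs

variable {α β : Type*} [LinearOrder β]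

def increasingPairs (A : Finset α) (g : α → β) : Finset (α × α) :=
  {x ∈ A ×ˢ A | g x.1 < g x.2}

theorem two_mul_card_increasingPairs (A : Finset α) (g : α → β) :
    2 * #(increasingPairs A g) = #{x ∈ A ×ˢ A | g x.1 ≠ g x.2} := by
  classical
  have hswap : #{x ∈ A ×ˢ A | g x.2 < g x.1} = #(increasingPairs A g) :=
    card_nbij' Prod.swap Prod.swap (by intro x; simp [increasingPairs, and_comm])
      (by intro x; simp [increasingPairs, and_comm]) (fun _ _ => rfl) (fun _ _ => rfl)
  have hdisj : Disjoint (increasingPairs A g) {x ∈ A ×ˢ A | g x.2 < g x.1} :=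
    disjoint_filter.2 fun _ _ h1 h2 => lt_asymm h1 h2
  rw [two_mul]
  nth_rw 2 [← hswap]
  rw [← card_union_of_disjoint hdisj, increasingPairs, ← filter_or]
  simp only [ne_iff_lt_or_gt]

theorem two_mul_card_increasingPairs_le (A : Finset α) (g : α → β) :
    2 * #(increasingPairs A g) ≤ #A * (#A - 1) := by
  classical
  rw [two_mul_card_increasingPairs, Nat.mul_sub_one, ← offDiag_card]
  refine card_le_card fun x hx => ?_
  simp only [mem_filter, mem_product] at hx
  exact mem_offDiag.2 ⟨hx.1.1, hx.1.2, fun h => hx.2 (congrArg g h)⟩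

theorem two_mul_card_increasingPairs_eq_of_injOn {A : Finset α} {g : α → β}
    (hg : Set.InjOn g A) : 2 * #(increasingPairs A g) = #A * (#A - 1) := by
  classical
  rw [two_mul_card_increasingPairs, Nat.mul_sub_one, ← offDiag_card]
  congr 1
  ext x
  simp only [mem_filter, mem_product, mem_offDiag]
  exact ⟨fun h => ⟨h.1.1, h.1.2, fun he => h.2 (congrArg g he)⟩,
    fun h => ⟨⟨h.1, h.2.1⟩, fun he => h.2.2 (hg h.1 h.2.1 he)⟩⟩

variable {s : ℕ}

theorem cast_card_erase_mul (hs : 2 ≤ s) (t : Fin s) :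
    (((#(univ.erase t)) * (#(univ.erase t) - 1) : ℕ) : ℝ) = (s - 1) * (s - 2) := by
  rw [card_erase_of_mem (mem_univ t), card_univ, Fintype.card_fin]
  push_cast [Nat.cast_sub (by omega : 1 ≤ s), Nat.cast_sub (by omega : 1 ≤ s - 1)]
  ring

theorem two_mul_card_increasingPairs_erase_le (hs : 2 ≤ s) (g : Fin s → β) (t : Fin s) :
    2 * (#(increasingPairs (univ.erase t) g) : ℝ) ≤ (s - 1) * (s - 2) := by
  rw [← cast_card_erase_mul hs t]
  exact_mod_cast two_mul_card_increasingPairs_le _ g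

theorem two_mul_card_increasingPairs_erase_eq (hs : 2 ≤ s) {g : Fin s → β} {t : Fin s}
    (hg : Set.InjOn g (univ.erase t)) :
    2 * (#(increasingPairs (univ.erase t) g) : ℝ) = (s - 1) * (s - 2) := by
  rw [← cast_card_erase_mul hs t]
  exact_mod_cast two_mul_card_increasingPairs_eq_of_injOn hg

end IncreasingPairs

section Discriminability

variable {n s : ℕ} (δ : Fin n × Fin s → Fin n × Fin s → ℝ)

theorem card_le_add_between_add_within (i : Fin n) (t t' : Fin s)
    (hnonneg : 0 ≤ δ (i, t) (i, t')) (hself : δ (i, t) (i, t) = 0) :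
    (#{q | δ (i, t) q ≤ δ (i, t) (i, t')} : ℝ)
      + ∑ i' ∈ univ.erase i, ∑ t'' : Fin s,
          (if δ (i, t) (i, t') < δ (i, t) (i', t'') then (1 : ℝ) else 0)
      + ∑ t'' ∈ univ.erase t, (if δ (i, t) (i, t') < δ (i, t) (i, t'') then (1 : ℝ) else 0)
      = n * s := by
  set a := δ (i, t) (i, t')
  have hsplit : (#{q | a < δ (i, t) q} : ℝ)
      = ∑ i' ∈ univ.erase i, ∑ t'' : Fin s, (if a < δ (i, t) (i', t'') then (1 : ℝ) else 0)
        + ∑ t'' ∈ univ.erase t, (if a < δ (i, t) (i, t'') then (1 : ℝ) else 0) := by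
    rw [← sum_boole, Fintype.sum_prod_type, ← add_sum_erase _ _ (mem_univ i),
      ← add_sum_erase _ _ (mem_univ t), hself, if_neg hnonneg.not_gt, zero_add, add_comm]
  have hcard := card_filter_add_card_filter_not (s := univ) (fun q => δ (i, t) q ≤ a)
  simp only [not_le, card_univ, Fintype.card_prod, Fintype.card_fin] at hcard
  rw [add_assoc, ← hsplit]
  exact_mod_cast hcard

theorem rank_numerator_sub_eq_sum_increasingPairs
    (hnonneg : ∀ p q, 0 ≤ δ p q) (hself : ∀ p, δ p p = 0) :
    (n : ℝ) ^ 2 * s ^ 2 * (s - 1)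
      - ∑ t : Fin s, ∑ t' ∈ univ.erase t, ∑ i : Fin n,
          (#{q | δ (i, t) q ≤ δ (i, t) (i, t')} : ℝ)
      - ∑ i : Fin n, ∑ t : Fin s, ∑ t' ∈ univ.erase t, ∑ i' ∈ univ.erase i, ∑ t'' : Fin s,
          (if δ (i, t) (i, t') < δ (i, t) (i', t'') then (1 : ℝ) else 0)
      = ∑ i : Fin n, ∑ t : Fin s,
          (#(increasingPairs (univ.erase t) (fun t' => δ (i, t) (i, t'))) : ℝ) := by
  have hconst : (n : ℝ) ^ 2 * s ^ 2 * (s - 1)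
      = ∑ _i : Fin n, ∑ t : Fin s, ∑ _t' ∈ univ.erase t, (n * s : ℝ) := by
    simp only [sum_erase_eq_sub (mem_univ _), sum_const, card_univ, Fintype.card_fin,
      nsmul_eq_mul]
    ring
  have hswap : ∑ t : Fin s, ∑ t' ∈ univ.erase t, ∑ i : Fin n,
        (#{q | δ (i, t) q ≤ δ (i, t) (i, t')} : ℝ)
      = ∑ i : Fin n, ∑ t : Fin s, ∑ t' ∈ univ.erase t,
        (#{q | δ (i, t) q ≤ δ (i, t) (i, t')} : ℝ) := by
    rw [sum_comm]
    exact sum_congr rfl fun i _ => sum_comm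
  rw [hconst, hswap]
  simp only [← sum_sub_distrib]
  refine sum_congr rfl fun i _ => sum_congr rfl fun t _ => ?_
  rw [increasingPairs, ← sum_boole, sum_product]
  refine sum_congr rfl fun t' _ => ?_
  linarith [card_le_add_between_add_within δ i t t' (hnonneg _ _) (hself _)]

end Discriminability

/-- with the combined `ns × ns` distance matrix `δ p q` (for
`p, q : Fin n × Fin s`), within-row max-ranks `r p q = #{q' : δ p q' ≤ δ p q}`, the rank-form
estimator `D̃ = (n²s²(s-1) - Σ_t Σ_{t'≠t} Σ_i r_{ii}^{tt'})/(ns(s-1)(n-1)s)` and the sample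
discriminability `D̂` satisfy `0 ≤ D̃ - D̂ ≤ (s-2)/(2(n-1)s)`, with equality
`D̃ - D̂ = (s-2)/(2(n-1)s)` when no ties exist among the within-subject distances
`δ_{i,i}^{t,t'}` for each fixed `i, t`. -/
theorem stmt10 (n s : ℕ) (hn : 2 ≤ n) (hs : 2 ≤ s)
    (δ : Fin n × Fin s → Fin n × Fin s → ℝ)
    (hnonneg : ∀ p q, 0 ≤ δ p q) (hself : ∀ p, δ p p = 0)
    (r : Fin n × Fin s → Fin n × Fin s → ℕ)
    (hr : ∀ p q, r p q = (univ.filter (fun q' => δ p q' ≤ δ p q)).card)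
    (Dtilde Dhat : ℝ)
    (hDtilde : Dtilde = ((n : ℝ) ^ 2 * s ^ 2 * (s - 1) -
        ∑ t : Fin s, ∑ t' ∈ univ.erase t, ∑ i : Fin n, (r (i, t) (i, t') : ℝ)) /
        ((n : ℝ) * s * (s - 1) * (n - 1) * s))
    (hDhat : Dhat = (∑ i : Fin n, ∑ t : Fin s, ∑ t' ∈ univ.erase t,
        ∑ i' ∈ univ.erase i, ∑ t'' : Fin s,
          (if δ (i, t) (i, t') < δ (i, t) (i', t'') then (1 : ℝ) else 0)) /
        ((n : ℝ) * s * (s - 1) * (n - 1) * s)) :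
    (0 ≤ Dtilde - Dhat ∧ Dtilde - Dhat ≤ ((s : ℝ) - 2) / (2 * (n - 1) * s)) ∧
      ((∀ (i : Fin n) (t t' t'' : Fin s), t' ≠ t'' → t' ≠ t → t'' ≠ t →
          δ (i, t) (i, t') ≠ δ (i, t) (i, t'')) →
        Dtilde - Dhat = ((s : ℝ) - 2) / (2 * (n - 1) * s)) := by
  have hs1 : (0 : ℝ) < s - 1 := by linarith [show (2 : ℝ) ≤ s by exact_mod_cast hs]
  have hn1 : (0 : ℝ) < n - 1 := by linarith [show (2 : ℝ) ≤ n by exact_mod_cast hn]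
  have hN : (0 : ℝ) < n * s * (s - 1) * (n - 1) * s := by positivity
  have hdiff : Dtilde - Dhat = (∑ i : Fin n, ∑ t : Fin s,
      (#(increasingPairs (univ.erase t) (fun t' => δ (i, t) (i, t'))) : ℝ)) /
      (n * s * (s - 1) * (n - 1) * s) := by
    rw [hDtilde, hDhat, div_sub_div_same,
      ← rank_numerator_sub_eq_sum_increasingPairs δ hnonneg hself]
    simp only [hr]
  have hbound : ((s : ℝ) - 2) / (2 * (n - 1) * s) = (∑ _i : Fin n, ∑ _t : Fin s,
      ((s : ℝ) - 1) * (s - 2) / 2) / (n * s * (s - 1) * (n - 1) * s) := by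
    simp only [sum_const, card_univ, Fintype.card_fin, nsmul_eq_mul]
    field_simp
  rw [hdiff, hbound]
  refine ⟨⟨by positivity, ?_⟩, fun hties => ?_⟩
  · gcongr with i _ t _
    linarith [two_mul_card_increasingPairs_erase_le hs (fun t' => δ (i, t) (i, t')) t]
  · refine congrArg (· / _) (sum_congr rfl fun i _ => sum_congr rfl fun t _ => ?_)
    have hinj : Set.InjOn (fun t' => δ (i, t) (i, t')) (univ.erase t) :=
      fun t' ht' t'' ht'' heq => by_contra fun hne =>
        hties i t t' t'' hne (ne_of_mem_erase ht') (ne_of_mem_erase ht'') heq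
    linarith [two_mul_card_increasingPairs_erase_eq hs hinj]
end

section
/- With H = [[2Σ, -Σ],[Σ, -2Σ - 2Σ_μ]] for positive definite l×l matrices Σ and Σ_μ, the absolute value of the sum of the negative eigenvalues of H, V₂ = |σ₋(H)|, satisfies tr((3/2)Σ + 2Σ_μ) ≤ V₂ ≤ tr(2Σ + 2Σ_μ). -/
/-!
Write `H = C * B` with `C = diag(1, -1)` and `B = [[2Σ, -Σ], [-Σ, 2Σ + 2Σ_μ]]`, which is
positive definite. Then `H` is similar to the symmetric matrix `√B C √B`, and Ky Fan's principle
`σ₋(X) = min {tr (X P) | 0 ≤ P ≤ 1}` becomes `σ₋(H) = min {tr (C R) | 0 ≤ R ≤ B}`.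
Since `tr (C R) = tr R₁₁ - tr R₂₂ ≥ -tr B₂₂`, we get `V₂ ≤ tr (2Σ + 2Σ_μ)`, while the admissible
`R = [[Σ/2, -Σ], [-Σ, 2Σ + 2Σ_μ]]`, for which `B - R = diag(3Σ/2, 0)`, gives
`V₂ ≥ tr ((3/2)Σ + 2Σ_μ)`.
-/

open Matrix Finset
open scoped MatrixOrder ComplexOrder

section NegativeSum

variable {n : Type*} [Fintype n]

/-- `σ₋` of a matrix whose eigenvalues, with multiplicity, are the values of `d`. -/
noncomputable def sumNeg (d : n → ℝ) : ℝ := ∑ i ∈ univ.filter (fun i => d i < 0), d i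

lemma sumNeg_eq_multiset_sum (d : n → ℝ) :
    sumNeg d = ((univ.val.map d).filter (· < 0)).sum := by
  rw [sumNeg, Multiset.filter_map, Finset.sum]
  rfl

variable [DecidableEq n]

lemma sumNeg_eq_of_charpoly_eq {d e : n → ℝ}
    (h : (diagonal d).charpoly = (diagonal e).charpoly) : sumNeg d = sumNeg e := by
  have hroots (f : n → ℝ) : (diagonal f).charpoly.roots = univ.val.map f := by
    have := Polynomial.roots_multiset_prod_X_sub_C (univ.val.map f)
    rw [Multiset.map_map] at this
    rwa [charpoly_diagonal, Finset.prod_eq_multiset_prod]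
  rw [sumNeg_eq_multiset_sum, sumNeg_eq_multiset_sum, ← hroots, ← hroots, h]

lemma sumNeg_le_trace_diagonal_mul (e : n → ℝ) {P : Matrix n n ℝ} (hP₀ : 0 ≤ P) (hP₁ : P ≤ 1) :
    sumNeg e ≤ (diagonal e * P).trace := by
  have htrace : (diagonal e * P).trace = ∑ i, e i * P i i := by
    simp [trace, diagonal_mul]
  rw [htrace, sumNeg, sum_filter]
  gcongr with i
  split_ifs with he
  · have : P i i ≤ 1 := by simpa using (le_iff.1 hP₁).diag_nonneg (i := i)
    nlinarith
  · exact mul_nonneg (not_lt.1 he) hP₀.posSemidef.diag_nonneg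

lemma isLeast_sumNeg_diagonal (e : n → ℝ) :
    IsLeast {t | ∃ P : Matrix n n ℝ, 0 ≤ P ∧ P ≤ 1 ∧ (diagonal e * P).trace = t} (sumNeg e) := by
  refine ⟨⟨diagonal fun i => if e i < 0 then 1 else 0, ?_, ?_, ?_⟩, ?_⟩
  · exact (PosSemidef.diagonal fun i => by dsimp; split_ifs <;> norm_num).nonneg
  · rw [le_iff, ← diagonal_one, diagonal_sub]
    exact PosSemidef.diagonal fun i => by dsimp; split_ifs <;> norm_num
  · simp [trace, sumNeg, sum_filter]
  · rintro _ ⟨P, hP₀, hP₁, rfl⟩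
    exact sumNeg_le_trace_diagonal_mul e hP₀ hP₁

lemma setOf_trace_conj_mul_eq {A : Matrix n n ℝ} (hA : IsUnit A) (Y M : Matrix n n ℝ) :
    {t | ∃ P, 0 ≤ P ∧ P ≤ M ∧ (A * Y * star A * P).trace = t} =
      {t | ∃ R, 0 ≤ R ∧ R ≤ star A * M * A ∧ (Y * R).trace = t} := by
  ext t
  constructor
  · rintro ⟨P, hP₀, hPM, rfl⟩
    refine ⟨star A * P * A, star_left_conjugate_nonneg hP₀ A,
      star_left_conjugate_le_conjugate hPM A, ?_⟩
    rw [show A * Y * star A * P = A * (Y * star A * P) by simp only [Matrix.mul_assoc],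
      trace_mul_comm A]
    simp only [Matrix.mul_assoc]
  · rintro ⟨R, hR₀, hRM, rfl⟩
    obtain ⟨u, rfl⟩ := hA
    set v : Matrix n n ℝ := ↑u⁻¹
    have huv : (u : Matrix n n ℝ) * v = 1 := u.mul_inv
    have hvu : v * (u : Matrix n n ℝ) = 1 := u.inv_mul
    refine ⟨star v * R * v, star_left_conjugate_nonneg hR₀ v, ?_, ?_⟩
    · have := star_left_conjugate_le_conjugate hRM v
      rwa [show star v * (star ↑u * M * ↑u) * v =
          star ((u : Matrix n n ℝ) * v) * M * ((u : Matrix n n ℝ) * v) by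
        simp only [star_mul, Matrix.mul_assoc], huv, star_one, Matrix.one_mul, Matrix.mul_one]
        at this
    · rw [show ↑u * Y * star ↑u * (star v * R * v) =
          (u : Matrix n n ℝ) * (Y * star (v * u) * R * v) by
        simp only [star_mul, Matrix.mul_assoc], hvu, star_one, Matrix.mul_one, trace_mul_comm]
      simp only [Matrix.mul_assoc, hvu, Matrix.mul_one]

theorem isLeast_sumNeg_eigenvalues {X : Matrix n n ℝ} (hX : X.IsHermitian) :
    IsLeast {t | ∃ P : Matrix n n ℝ, 0 ≤ P ∧ P ≤ 1 ∧ (X * P).trace = t}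
      (sumNeg hX.eigenvalues) := by
  set U : Matrix n n ℝ := (hX.eigenvectorUnitary : Matrix n n ℝ)
  have hX_eq : X = U * diagonal hX.eigenvalues * star U := by
    simpa using hX.spectral_theorem
  have hU : star U * 1 * U = 1 := by simp [U]
  have hset := setOf_trace_conj_mul_eq (Unitary.isUnit_coe (U := hX.eigenvectorUnitary))
    (diagonal hX.eigenvalues) 1
  rw [← hX_eq, hU] at hset
  rw [hset]
  exact isLeast_sumNeg_diagonal _

/-- `C * B` is similar to the symmetric matrix `√B C √B`, and `P ↦ √B P √B` maps the interval
`[0, 1]` onto `[0, B]`. -/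
theorem isLeast_sumNeg_of_mul_eq {C B Q : Matrix n n ℝ} {d : n → ℝ} (hC : C.IsHermitian)
    (hB : B.PosDef) (hQ : IsUnit Q) (hCB : C * B = Q * diagonal d * Q⁻¹) :
    IsLeast {t | ∃ R : Matrix n n ℝ, 0 ≤ R ∧ R ≤ B ∧ (C * R).trace = t} (sumNeg d) := by
  set A := CFC.sqrt B
  have hAA : A * A = B := CFC.sqrt_mul_sqrt_self B hB.posSemidef.nonneg
  have hA : IsUnit A := (CFC.isUnit_sqrt_iff B).2 hB.isUnit
  have hA_star : star A = A := (CFC.sqrt_nonneg B).isSelfAdjoint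
  have hX : (A * C * star A).IsHermitian := isHermitian_mul_mul_conjTranspose _ hC
  have hX_eq : A * C * star A = (A * Q) * diagonal d * (A * Q)⁻¹ := by
    have hA_inv : A * A⁻¹ = 1 := mul_nonsing_inv A ((isUnit_iff_isUnit_det A).1 hA)
    calc A * C * star A = A * (C * (A * A)) * A⁻¹ := by
          rw [hA_star]; simp only [Matrix.mul_assoc, hA_inv, Matrix.mul_one]
      _ = (A * Q) * diagonal d * (A * Q)⁻¹ := by
          rw [hAA, hCB, Matrix.mul_inv_rev]; simp only [Matrix.mul_assoc]
  have hX_char : (A * C * star A).charpoly = (diagonal d).charpoly := by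
    rw [hX_eq]
    exact charpoly_units_conj (hA.mul hQ).unit _
  have hchar : (diagonal hX.eigenvalues).charpoly = (diagonal d).charpoly := by
    rw [← hX_char, hX.charpoly_eq, charpoly_diagonal]
    rfl
  have hset := setOf_trace_conj_mul_eq hA C 1
  rw [show star A * 1 * A = B by rw [Matrix.mul_one, hA_star, hAA]] at hset
  rw [← sumNeg_eq_of_charpoly_eq hchar, ← hset]
  exact isLeast_sumNeg_eigenvalues hX

end NegativeSum

section Blocks

variable {m p : Type*} [Fintype m] [Fintype p] {𝕜 : Type*} [RCLike 𝕜]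

lemma posSemidef_fromBlocks_zero {A : Matrix m m 𝕜} {D : Matrix p p 𝕜}
    (hA : A.PosSemidef) (hD : D.PosSemidef) : (fromBlocks A 0 0 D).PosSemidef := by
  refine .of_dotProduct_mulVec_nonneg ?_ fun x => ?_
  · simp [IsHermitian, fromBlocks_conjTranspose, hA.1.eq, hD.1.eq]
  · rw [← Sum.elim_comp_inl_inr x, fromBlocks_mulVec]
    simp only [zero_mulVec, add_zero, zero_add, Function.star_sumElim,
      sumElim_dotProduct_sumElim]
    exact add_nonneg (hA.dotProduct_mulVec_nonneg _) (hD.dotProduct_mulVec_nonneg _)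

lemma posDef_fromBlocks_zero [DecidableEq m] [DecidableEq p] {A : Matrix m m 𝕜}
    {D : Matrix p p 𝕜} (hA : A.PosDef) (hD : D.PosDef) : (fromBlocks A 0 0 D).PosDef :=
  (posSemidef_fromBlocks_zero hA.posSemidef hD.posSemidef).posDef_iff_isUnit.2
    (isUnit_fromBlocks_zero₂₁.2 ⟨hA.isUnit, hD.isUnit⟩)

end Blocks

section RealBlocks

variable {m : Type*} [Fintype m] [DecidableEq m]

lemma posDef_fromBlocks_smul {A D : Matrix m m ℝ} (hA : A.PosDef) (hD : D.PosDef) (c : ℝ) :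
    (fromBlocks A (c • A) (c • A) (D + c ^ 2 • A)).PosDef := by
  set N : Matrix (m ⊕ m) (m ⊕ m) ℝ := fromBlocks 1 (c • 1) 0 1
  have hN : Function.Injective N.mulVec :=
    mulVec_injective_iff_isUnit.2 (isUnit_fromBlocks_zero₂₁.2 ⟨isUnit_one, isUnit_one⟩)
  have hNA : Nᴴ * fromBlocks A 0 0 D * N = fromBlocks A (c • A) (c • A) (D + c ^ 2 • A) := by
    simp only [N, fromBlocks_conjTranspose, fromBlocks_multiply]
    congr 1 <;> simp [sq, smul_smul, add_comm]
  rw [← hNA]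
  exact (posDef_fromBlocks_zero hA hD).conjTranspose_mul_mul_same hN

lemma trace_fromBlocks_one_neg_one_mul (R : Matrix (m ⊕ m) (m ⊕ m) ℝ) :
    (fromBlocks 1 0 0 (-1) * R).trace = R.toBlocks₁₁.trace - R.toBlocks₂₂.trace := by
  rw [← fromBlocks_toBlocks R, fromBlocks_multiply]
  simp [trace, Fintype.sum_sum_type, sub_eq_add_neg]

lemma neg_trace_toBlocks₂₂_le_trace_fromBlocks_one_neg_one_mul {R B : Matrix (m ⊕ m) (m ⊕ m) ℝ}
    (hR : 0 ≤ R) (hRB : R ≤ B) : -B.toBlocks₂₂.trace ≤ (fromBlocks 1 0 0 (-1) * R).trace := by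
  have h₁ : 0 ≤ R.toBlocks₁₁.trace := (hR.posSemidef.submatrix Sum.inl).trace_nonneg
  have h₂ : 0 ≤ (B - R).toBlocks₂₂.trace := ((le_iff.1 hRB).submatrix Sum.inr).trace_nonneg
  rw [show (B - R).toBlocks₂₂ = B.toBlocks₂₂ - R.toBlocks₂₂ from rfl, trace_sub] at h₂
  rw [trace_fromBlocks_one_neg_one_mul]
  linarith

variable {S Sμ : Matrix m m ℝ}

lemma posDef_fromBlocks_two_smul_add (hS : S.PosDef) (hSμ : Sμ.PosDef) :
    (fromBlocks (2 • S) (-S) (-S) (2 • S + 2 • Sμ)).PosDef := by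
  convert posDef_fromBlocks_smul (hS.smul (two_pos : (0 : ℝ) < 2))
    ((hS.smul (by norm_num : (0 : ℝ) < 3 / 2)).add (hSμ.smul (two_pos : (0 : ℝ) < 2)))
    (-1 / 2) using 2 <;> module

lemma fromBlocks_half_smul_mem_Icc (hS : S.PosDef) (hSμ : Sμ.PosDef) :
    fromBlocks ((1 / 2 : ℝ) • S) (-S) (-S) (2 • S + 2 • Sμ) ∈
      Set.Icc 0 (fromBlocks (2 • S) (-S) (-S) (2 • S + 2 • Sμ)) := by
  constructor
  · have := posDef_fromBlocks_smul (hS.smul (by norm_num : (0 : ℝ) < 1 / 2))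
      (hSμ.smul (two_pos : (0 : ℝ) < 2)) (-2)
    convert this.posSemidef.nonneg using 2 <;> module
  · rw [le_iff, sub_eq_add_neg, fromBlocks_neg, fromBlocks_add]
    convert posSemidef_fromBlocks_zero (hS.posSemidef.smul (by norm_num : (0 : ℝ) ≤ 3 / 2))
      (PosSemidef.zero : (0 : Matrix m m ℝ).PosSemidef) using 2 <;> module

end RealBlocks

theorem stmt15_general (l : ℕ) (S Sμ : Matrix (Fin l) (Fin l) ℝ)
    (hS : S.PosDef) (hSμ : Sμ.PosDef)
    (H : Matrix (Fin l ⊕ Fin l) (Fin l ⊕ Fin l) ℝ)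
    (hH : H = Matrix.fromBlocks (2 • S) (-S) S (-(2 • S) - 2 • Sμ))
    (d : Fin l ⊕ Fin l → ℝ) (Q : Matrix (Fin l ⊕ Fin l) (Fin l ⊕ Fin l) ℝ)
    (hQ : IsUnit Q) (hdiag : H = Q * Matrix.diagonal d * Q⁻¹)
    (V₂ : ℝ) (hV₂ : V₂ = -(∑ i ∈ univ.filter (fun i => d i < 0), d i)) :
    ((3 / 2 : ℝ) • S + 2 • Sμ).trace ≤ V₂ ∧ V₂ ≤ ((2 : ℝ) • S + 2 • Sμ).trace := by
  set C : Matrix (Fin l ⊕ Fin l) (Fin l ⊕ Fin l) ℝ := fromBlocks 1 0 0 (-1)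
  set B : Matrix (Fin l ⊕ Fin l) (Fin l ⊕ Fin l) ℝ :=
    fromBlocks (2 • S) (-S) (-S) (2 • S + 2 • Sμ)
  set R₀ : Matrix (Fin l ⊕ Fin l) (Fin l ⊕ Fin l) ℝ :=
    fromBlocks ((1 / 2 : ℝ) • S) (-S) (-S) (2 • S + 2 • Sμ)
  have hCB : C * B = H := by
    rw [hH, fromBlocks_multiply]
    congr 1 <;> simp [sub_eq_add_neg, add_comm]
  have hC : C.IsHermitian := by simp [C, IsHermitian, fromBlocks_transpose]
  obtain ⟨⟨R, hR, hRB, hRσ⟩, hσR₀⟩ :=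
    isLeast_sumNeg_of_mul_eq hC (posDef_fromBlocks_two_smul_add hS hSμ) hQ (hCB.trans hdiag)
  obtain ⟨hR₀, hR₀B⟩ := fromBlocks_half_smul_mem_Icc hS hSμ
  have hupper := hRσ ▸ neg_trace_toBlocks₂₂_le_trace_fromBlocks_one_neg_one_mul hR hRB
  have hlower := hσR₀ ⟨R₀, hR₀, hR₀B, rfl⟩
  rw [trace_fromBlocks_one_neg_one_mul] at hlower
  rw [hV₂]
  change _ ≤ -sumNeg d ∧ -sumNeg d ≤ _
  simp only [R₀, toBlocks_fromBlocks₁₁, toBlocks_fromBlocks₂₂, trace_add, trace_smul]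
    at hupper hlower ⊢
  simp only [smul_eq_mul, nsmul_eq_mul] at hupper hlower ⊢
  push_cast at hupper hlower ⊢
  constructor <;> linarith

/-- with `H = [[2Σ, -Σ],[Σ, -2Σ - 2Σ_μ]]` for positive definite `l×l`
matrices `Σ, Σ_μ`, if `d` lists the (real) eigenvalues of `H` (via a diagonalization
`H = Q (diagonal d) Q⁻¹`), then the absolute value `V₂` of the sum of the negative
eigenvalues of `H` satisfies `tr((3/2)Σ + 2Σ_μ) ≤ V₂ ≤ tr(2Σ + 2Σ_μ)`. -/
theorem stmt15 (l : ℕ) (hl : 0 < l) (S Sμ : Matrix (Fin l) (Fin l) ℝ)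
    (hS : S.PosDef) (hSμ : Sμ.PosDef)
    (H : Matrix (Fin l ⊕ Fin l) (Fin l ⊕ Fin l) ℝ)
    (hH : H = Matrix.fromBlocks (2 • S) (-S) S (-(2 • S) - 2 • Sμ))
    (d : Fin l ⊕ Fin l → ℝ) (Q : Matrix (Fin l ⊕ Fin l) (Fin l ⊕ Fin l) ℝ)
    (hQ : IsUnit Q) (hdiag : H = Q * Matrix.diagonal d * Q⁻¹)
    (V₂ : ℝ) (hV₂ : V₂ = -(∑ i ∈ univ.filter (fun i => d i < 0), d i)) :
    ((3 / 2 : ℝ) • S + 2 • Sμ).trace ≤ V₂ ∧ V₂ ≤ ((2 : ℝ) • S + 2 • Sμ).trace :=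
  stmt15_general l S Sμ hS hSμ H hH d Q hQ hdiag V₂ hV₂
end
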